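/- Let m ≥ 0 and n > 1 be integers. Then there is a real number δ with 0 ≤ δ < 1 such that for every continuous map f : S^{n−1} → ℝ^{m+n−1} with f(−v) = −f(v) for all v ∈ S^{n−1}, there is a finite subset X ⊆ S^{n−1} of cardinality at most m+n and of diameter at most π − arccos(δ) (which is strictly less than π) such that 0 lies in the convex hull of f(X). -/
import Mathlib


open Metric RealInnerProductSpace

/-- Corollary 2.4 of the paper. For integers `m ≥ 0` and `n > 1` there
is a real number `0 ≤ δ < 1` such that for any odd continuous map
`f : S^{n-1} → ℝ^{m+n-1}` there is a finite subset `X ⊆ S^{n-1}` of cardinality at most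
`m+n` and geodesic diameter at most `π - arccos δ < π` with `0` in the convex hull of
`f(X)`. -/
theorem stmt5 (m n : ℕ) (hn : 1 < n) :
    ∃ δ : ℝ, 0 ≤ δ ∧ δ < 1 ∧
      Real.pi - Real.arccos δ < Real.pi ∧
      ∀ f : EuclideanSpace ℝ (Fin n) → EuclideanSpace ℝ (Fin (m + n - 1)),
        ContinuousOn f (sphere 0 1) →
        (∀ v ∈ sphere (0 : EuclideanSpace ℝ (Fin n)) 1, f (-v) = -f v) →
        ∃ X : Finset (EuclideanSpace ℝ (Fin n)),
          ↑X ⊆ sphere (0 : EuclideanSpace ℝ (Fin n)) 1 ∧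
          X.card ≤ m + n ∧
          (∀ x ∈ X, ∀ y ∈ X, Real.arccos ⟪x, y⟫ ≤ Real.pi - Real.arccos δ) ∧
          (0 : EuclideanSpace ℝ (Fin (m + n - 1))) ∈ convexHull ℝ (f '' ↑X) := by
  have pi_pos := Real.pi_pos
  set K : ℕ := m + n with hKdef
  have hK2 : 2 ≤ K := by omega
  have hKR : (2 : ℝ) ≤ (K : ℝ) := by exact_mod_cast hK2
  set θ : ℝ := Real.pi / K with hθdef
  have hθpos : 0 < θ := div_pos pi_pos (by linarith)
  have hθhalf : θ ≤ Real.pi / 2 := by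
    rw [hθdef, div_le_div_iff₀ (by linarith) (by norm_num)]
    nlinarith
  have hθpi : θ ≤ Real.pi := by linarith
  have hδ0 : 0 ≤ Real.cos θ := Real.cos_nonneg_of_mem_Icc ⟨by linarith, hθhalf⟩
  have hδ1 : Real.cos θ < 1 := by
    have := Real.cos_lt_cos_of_nonneg_of_le_pi (le_refl 0) hθpi hθpos
    rwa [Real.cos_zero] at this
  have harccos : Real.arccos (Real.cos θ) = θ := Real.arccos_cos hθpos.le hθpi
  refine ⟨Real.cos θ, hδ0, hδ1, by rw [harccos]; linarith, ?_⟩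
  intro f _hf hodd
  classical
  -- the great-circle points
  set e0 : EuclideanSpace ℝ (Fin n) := EuclideanSpace.single ⟨0, by omega⟩ 1 with he0
  set e1 : EuclideanSpace ℝ (Fin n) := EuclideanSpace.single ⟨1, by omega⟩ 1 with he1
  set t : Fin K → ℝ := fun i => (i : ℝ) * θ with htdef
  set c : Fin K → EuclideanSpace ℝ (Fin n) :=
    fun i => Real.cos (t i) • e0 + Real.sin (t i) • e1 with hcdef
  have hinner : ∀ i j, ⟪c i, c j⟫ = Real.cos (t i - t j) := by
    intro i j
    have h00 : ⟪e0, e0⟫ = (1 : ℝ) := by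
      simp [he0, EuclideanSpace.inner_single_left, EuclideanSpace.single_apply]
    have h01 : ⟪e0, e1⟫ = (0 : ℝ) := by
      simp [he0, he1, EuclideanSpace.inner_single_left, EuclideanSpace.single_apply]
    have h10 : ⟪e1, e0⟫ = (0 : ℝ) := by
      simp [he0, he1, EuclideanSpace.inner_single_left, EuclideanSpace.single_apply]
    have h11 : ⟪e1, e1⟫ = (1 : ℝ) := by
      simp [he1, EuclideanSpace.inner_single_left, EuclideanSpace.single_apply]
    rw [hcdef]
    simp only [inner_add_left, inner_add_right, real_inner_smul_left, real_inner_smul_right,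
      h00, h01, h10, h11, Real.cos_sub]
    ring
  have hsph : ∀ i, c i ∈ sphere (0 : EuclideanSpace ℝ (Fin n)) 1 := by
    intro i
    rw [mem_sphere_zero_iff_norm]
    have h2 : ‖c i‖ ^ 2 = 1 := by
      rw [← real_inner_self_eq_norm_sq, hinner]
      simp
    have h3 : (‖c i‖ - 1) * (‖c i‖ + 1) = 0 := by ring_nf; nlinarith
    rcases mul_eq_zero.mp h3 with h | h
    · linarith
    · have := norm_nonneg (c i); linarith
  -- linear dependence of the K images in ℝ^(K-1)
  have hnli : ¬ LinearIndependent ℝ (fun i : Fin K => f (c i)) := by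
    intro h
    have hle := h.fintype_card_le_finrank
    rw [finrank_euclideanSpace_fin, Fintype.card_fin] at hle
    omega
  obtain ⟨g, hgsum, i₀, hgi₀⟩ := Fintype.not_linearIndependent_iff.mp hnli
  -- flip points to antipodes to make all coefficients nonnegative
  set x : Fin K → EuclideanSpace ℝ (Fin n) := fun i => if 0 ≤ g i then c i else -c i with hxdef
  have hxsph : ∀ i, x i ∈ sphere (0 : EuclideanSpace ℝ (Fin n)) 1 := by
    intro i
    have hxi : x i = if 0 ≤ g i then c i else -c i := rfl
    rw [hxi]
    split_ifs
    · exact hsph i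
    · rw [mem_sphere_zero_iff_norm, norm_neg]
      exact mem_sphere_zero_iff_norm.mp (hsph i)
  have hfx : ∀ i, |g i| • f (x i) = g i • f (c i) := by
    intro i
    have hxi : x i = if 0 ≤ g i then c i else -c i := rfl
    rw [hxi]
    by_cases h : 0 ≤ g i
    · rw [if_pos h, abs_of_nonneg h]
    · rw [if_neg h, hodd (c i) (hsph i), abs_of_neg (not_le.mp h)]
      simp
  set X : Finset (EuclideanSpace ℝ (Fin n)) := Finset.image x Finset.univ with hXdef
  have hXmem : ∀ i, x i ∈ X := by
    intro i
    rw [hXdef]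
    exact Finset.mem_image_of_mem x (Finset.mem_univ i)
  refine ⟨X, ?_, ?_, ?_, ?_⟩
  · -- X ⊆ sphere
    intro a ha
    rw [hXdef] at ha
    simp only [Finset.coe_image, Finset.coe_univ, Set.image_univ, Set.mem_range] at ha
    obtain ⟨i, rfl⟩ := ha
    exact hxsph i
  · -- card
    rw [hXdef]
    calc (Finset.image x Finset.univ).card ≤ (Finset.univ : Finset (Fin K)).card :=
        Finset.card_image_le
      _ = K := by rw [Finset.card_univ, Fintype.card_fin]
  · -- pairwise angles
    intro a ha b hb
    rw [hXdef] at ha hb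
    simp only [Finset.mem_image, Finset.mem_univ, true_and] at ha hb
    obtain ⟨i, rfl⟩ := ha
    obtain ⟨j, rfl⟩ := hb
    rw [harccos]
    by_cases hij : i = j
    · subst hij
      have h1 : ⟪x i, x i⟫ = (1 : ℝ) := by
        rw [real_inner_self_eq_norm_sq, mem_sphere_zero_iff_norm.mp (hxsph i)]
        norm_num
      rw [h1, Real.arccos_one]
      linarith
    · -- |cos (t i - t j)| ≤ cos θ
      have h1 : (1 : ℝ) ≤ |(i : ℝ) - (j : ℝ)| := by
        have hne : ((i : ℤ) - (j : ℤ)) ≠ 0 := by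
          simp only [sub_ne_zero]
          exact_mod_cast fun h => hij (Fin.val_injective (by exact_mod_cast h))
        exact_mod_cast Int.one_le_abs hne
      have h2 : |(i : ℝ) - (j : ℝ)| ≤ (K : ℝ) - 1 := by
        rw [abs_le]
        have hi : ((i : ℕ) : ℝ) ≤ (K : ℝ) - 1 := by
          have : (i : ℕ) + 1 ≤ K := i.isLt
          have : ((i : ℕ) : ℝ) + 1 ≤ (K : ℝ) := by exact_mod_cast this
          linarith
        have hj : ((j : ℕ) : ℝ) ≤ (K : ℝ) - 1 := by
          have : (j : ℕ) + 1 ≤ K := j.isLt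
          have : ((j : ℕ) : ℝ) + 1 ≤ (K : ℝ) := by exact_mod_cast this
          linarith
        have hi0 : (0 : ℝ) ≤ ((i : ℕ) : ℝ) := Nat.cast_nonneg _
        have hj0 : (0 : ℝ) ≤ ((j : ℕ) : ℝ) := Nat.cast_nonneg _
        constructor <;> linarith
      have habst : |t i - t j| = |(i : ℝ) - (j : ℝ)| * θ := by
        rw [htdef]
        simp only []
        rw [← sub_mul, abs_mul, abs_of_pos hθpos]
      have hl : θ ≤ |t i - t j| := by rw [habst]; nlinarith
      have hu : |t i - t j| ≤ Real.pi - θ := by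
        rw [habst]
        have : ((K : ℝ) - 1) * θ = Real.pi - θ := by
          rw [hθdef]
          field_simp
        nlinarith
      have hcos_le : Real.cos (t i - t j) ≤ Real.cos θ := by
        have h := Real.cos_le_cos_of_nonneg_of_le_pi hθpos.le
          (le_trans hu (by linarith : Real.pi - θ ≤ Real.pi)) hl
        rwa [Real.cos_abs] at h
      have hcos_ge : -Real.cos θ ≤ Real.cos (t i - t j) := by
        have h := Real.cos_le_cos_of_nonneg_of_le_pi (abs_nonneg (t i - t j))
          (by linarith : Real.pi - θ ≤ Real.pi) hu
        rw [Real.cos_abs, Real.cos_pi_sub] at h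
        linarith
      have hz : -Real.cos θ ≤ ⟪x i, x j⟫ := by
        have hcc := hinner i j
        have hxi : x i = if 0 ≤ g i then c i else -c i := rfl
        have hxj : x j = if 0 ≤ g j then c j else -c j := rfl
        rw [hxi, hxj]
        split_ifs
        · rw [hcc]; exact hcos_ge
        · rw [inner_neg_right, hcc]; linarith
        · rw [inner_neg_left, hcc]; linarith
        · rw [inner_neg_left, inner_neg_right, neg_neg, hcc]; exact hcos_ge
      have harc : Real.arccos ⟪x i, x j⟫ ≤ Real.arccos (-Real.cos θ) := by
        unfold Real.arccos
        have := Real.monotone_arcsin hz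
        linarith
      calc Real.arccos ⟪x i, x j⟫ ≤ Real.arccos (-Real.cos θ) := harc
        _ = Real.pi - Real.arccos (Real.cos θ) := Real.arccos_neg _
        _ = Real.pi - θ := by rw [harccos]
  · -- 0 in convex hull
    have hsum0 : ∑ i : Fin K, |g i| • f (x i) = 0 := by
      rw [Finset.sum_congr rfl (fun i _ => hfx i)]
      exact hgsum
    have hS : 0 < ∑ i : Fin K, |g i| :=
      Finset.sum_pos' (fun i _ => abs_nonneg _) ⟨i₀, Finset.mem_univ _, abs_pos.mpr hgi₀⟩
    have hmem := Finset.centerMass_mem_convexHull (Finset.univ : Finset (Fin K))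
      (w := fun i => |g i|) (fun i _ => abs_nonneg _) hS
      (z := fun i => f (x i))
      (fun i _ => Set.mem_image_of_mem f (by exact_mod_cast hXmem i))
    rwa [Finset.centerMass, hsum0, smul_zero] at hmem
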